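/- arXiv:2302.11896 — 2 statements merged into one kernel-verified Lean document; each statement's English description precedes it below -/
import Mathlib

section
/- The block approximation γ^δ of a transport plan γ ∈ Π(μ,ν) at scale δ ∈ (0,1) is again a transport plan: γ^δ ∈ Π(μ,ν), i.e. its first marginal is μ and its second marginal is ν. -/
open MeasureTheory ENNReal Filter
open scoped Classical

noncomputable section

/-- ℝ^d with its Euclidean structure. -/
abbrev Rd (d : ℕ) := EuclideanSpace ℝ (Fin d)

/-- γ ∈ Π(μ,ν): γ has first marginal μ and second marginal ν. -/
def IsCoupling {E F : Type*} [MeasurableSpace E] [MeasurableSpace F]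
    (γ : Measure (E × F)) (μ : Measure E) (ν : Measure F) : Prop :=
  γ.map Prod.fst = μ ∧ γ.map Prod.snd = ν

/-- Relative entropy H(γ|ρ) = ∫ log(dγ/dρ) dγ if γ ≪ ρ (and the integral exists), +∞ otherwise. -/
def relEntropy {E : Type*} [MeasurableSpace E] (γ ρ : Measure E) : ℝ≥0∞ :=
  if γ ≪ ρ ∧ Integrable (llr γ ρ) γ then ENNReal.ofReal (∫ z, llr γ ρ z ∂γ) else ∞

/-- The entropic functional J_{p,ε}(γ) = (∫ c^p dγ + ε H(γ|μ⊗ν))^{1/p} on Π(μ,ν), +∞ outside. -/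
def Jpe {d : ℕ} (c : Rd d × Rd d → ℝ) (μ ν : Measure (Rd d)) (p ε : ℝ)
    (γ : Measure (Rd d × Rd d)) : ℝ≥0∞ :=
  if IsCoupling γ μ ν then
    (∫⁻ z, ENNReal.ofReal (c z ^ p) ∂γ + ENNReal.ofReal ε * relEntropy γ (μ.prod ν)) ^ (1 / p)
  else ∞

/-- The supremal functional J_∞(γ) = γ-ess sup c on Π(μ,ν), +∞ outside. -/
def Jinf {d : ℕ} (c : Rd d × Rd d → ℝ) (μ ν : Measure (Rd d))
    (γ : Measure (Rd d × Rd d)) : ℝ≥0∞ :=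
  if IsCoupling γ μ ν then essSup (fun z => ENNReal.ofReal (c z)) γ else ∞

/-- Weak-star convergence of a family of (probability) measures, as the real parameter p → ∞. -/
def WeakStarTendsto {E : Type*} [MeasurableSpace E] [TopologicalSpace E]
    (γ : ℝ → Measure E) (γ₀ : Measure E) : Prop :=
  ∀ f : BoundedContinuousFunction E ℝ,
    Tendsto (fun p => ∫ z, f z ∂(γ p)) atTop (nhds (∫ z, f z ∂γ₀))

/-- The support of a Borel measure: points all of whose neighborhoods have positive measure. -/
def msupport {E : Type*} [MeasurableSpace E] [TopologicalSpace E] (μ : Measure E) : Set E :=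
  {x | ∀ U ∈ nhds x, μ U ≠ 0}

/-- The half-open cube Q_k^δ = δ(k + [0,1)^d). -/
def blockCube (d : ℕ) (δ : ℝ) (k : Fin d → ℤ) : Set (Rd d) :=
  {x | ∀ i, x i ∈ Set.Ico (δ * k i) (δ * (k i + 1))}

/-- The normalized restriction μ_Q = μ(Q ∩ ·)/μ(Q). -/
def normRestrict {E : Type*} [MeasurableSpace E] (μ : Measure E) (Q : Set E) : Measure E :=
  (μ Q)⁻¹ • μ.restrict Q

/-- The block approximation γ^δ = ∑_{k,l} γ(Q_k^δ × Q_l^δ) μ_k^δ ⊗ ν_l^δ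
    (terms with μ(Q_k^δ) = 0 or ν(Q_l^δ) = 0 vanish automatically). -/
def blockApprox {d : ℕ} (μ ν : Measure (Rd d)) (γ : Measure (Rd d × Rd d)) (δ : ℝ) :
    Measure (Rd d × Rd d) :=
  Measure.sum (fun kl : (Fin d → ℤ) × (Fin d → ℤ) =>
    γ (blockCube d δ kl.1 ×ˢ blockCube d δ kl.2) •
      ((normRestrict μ (blockCube d δ kl.1)).prod (normRestrict ν (blockCube d δ kl.2))))

/-! Projected to the first factor, the block on `Q_k × Q_l` becomes `γ(Q_k × Q_l) μ_k`: a block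
with `ν(Q_l) = 0` is `γ`-null because `ν` is the second marginal of `γ`. Summing over `l` gives
`μ(Q_k) μ_k = μ|_{Q_k}`, and these restrictions sum to `μ`. The argument works for any countable
measurable partitions of the two factors, and the second marginal follows by swapping them. -/

instance {E : Type*} [MeasurableSpace E] (μ : Measure E) [SFinite μ] (Q : Set E) :
    SFinite (normRestrict μ Q) := by
  unfold normRestrict; infer_instance

lemma MeasureTheory.Measure.sum_smul_const {ι E : Type*} [MeasurableSpace E] (c : ι → ℝ≥0∞)
    (m : Measure E) :
    Measure.sum (fun i => c i • m) = (∑' i, c i) • m := by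
  ext s hs
  simp only [Measure.sum_apply _ hs, Measure.smul_apply, smul_eq_mul, ENNReal.tsum_mul_right]

lemma measure_smul_normRestrict {E : Type*} [MeasurableSpace E] (μ : Measure E)
    [IsFiniteMeasure μ] (Q : Set E) : μ Q • normRestrict μ Q = μ.restrict Q := by
  by_cases hQ : μ Q = 0
  · rw [hQ, zero_smul, Measure.restrict_eq_zero.2 hQ]
  · rw [normRestrict, smul_smul, ENNReal.mul_inv_cancel hQ (measure_ne_top μ Q), one_smul]

lemma normRestrict_univ {E : Type*} [MeasurableSpace E] (μ : Measure E)
    [IsFiniteMeasure μ] {Q : Set E} (hQ : μ Q ≠ 0) : normRestrict μ Q Set.univ = 1 := by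
  rw [normRestrict, Measure.smul_apply, Measure.restrict_apply_univ, smul_eq_mul,
    ENNReal.inv_mul_cancel hQ (measure_ne_top μ Q)]

structure IsMeasurablePartition {ι E : Type*} [MeasurableSpace E] (Q : ι → Set E) : Prop where
  measurableSet : ∀ i, MeasurableSet (Q i)
  pairwise_disjoint : Pairwise (Function.onFun Disjoint Q)
  iUnion_eq_univ : ⋃ i, Q i = Set.univ

lemma IsMeasurablePartition.sum_restrict {ι E : Type*} [Countable ι] [MeasurableSpace E]
    {Q : ι → Set E} (hQ : IsMeasurablePartition Q) (μ : Measure E) :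
    Measure.sum (fun i => μ.restrict (Q i)) = μ := by
  rw [← Measure.restrict_iUnion hQ.pairwise_disjoint hQ.measurableSet, hQ.iUnion_eq_univ,
    Measure.restrict_univ]

section Coupling

variable {E F : Type*} [MeasurableSpace E] [MeasurableSpace F]
  {γ : Measure (E × F)} {μ : Measure E} {ν : Measure F}

lemma IsCoupling.swap (hγ : IsCoupling γ μ ν) : IsCoupling (γ.map Prod.swap) ν μ := by
  refine ⟨?_, ?_⟩
  · rw [Measure.map_map measurable_fst measurable_swap]; exact hγ.2
  · rw [Measure.map_map measurable_snd measurable_swap]; exact hγ.1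

lemma IsCoupling.isProbabilityMeasure [IsProbabilityMeasure μ] (hγ : IsCoupling γ μ ν) :
    IsProbabilityMeasure γ := by
  constructor
  rw [← Set.preimage_univ (f := Prod.fst), ← Measure.map_apply measurable_fst MeasurableSet.univ,
    hγ.1, measure_univ]

lemma IsCoupling.measure_prod_eq_zero_of_right (hγ : IsCoupling γ μ ν) (Q : Set E) {R : Set F}
    (hR : MeasurableSet R) (hνR : ν R = 0) : γ (Q ×ˢ R) = 0 :=
  measure_mono_null (Set.prod_subset_preimage_snd Q R) <| by
    rwa [← Measure.map_apply measurable_snd hR, hγ.2]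

lemma IsCoupling.tsum_measure_prod {κ : Type*} [Countable κ] (hγ : IsCoupling γ μ ν)
    {Q : Set E} (hQ : MeasurableSet Q) {R : κ → Set F} (hR : IsMeasurablePartition R) :
    ∑' l, γ (Q ×ˢ R l) = μ Q := by
  rw [← measure_iUnion
      (fun _ _ hll' => Set.Disjoint.set_prod_right (hR.pairwise_disjoint hll') Q Q)
      (fun l => hQ.prod (hR.measurableSet l)),
    ← Set.prod_iUnion, hR.iUnion_eq_univ, Set.prod_univ, ← Measure.map_apply measurable_fst hQ,
    hγ.1]

end Coupling

/-- `blockApprox μ ν γ δ` is definitionally `partitionBlockApprox μ ν γ Q Q` with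
`Q = blockCube d δ`. -/
def partitionBlockApprox {ι κ E F : Type*} [MeasurableSpace E] [MeasurableSpace F]
    (μ : Measure E) (ν : Measure F) (γ : Measure (E × F)) (Q : ι → Set E) (R : κ → Set F) :
    Measure (E × F) :=
  Measure.sum fun kl : ι × κ =>
    γ (Q kl.1 ×ˢ R kl.2) • (normRestrict μ (Q kl.1)).prod (normRestrict ν (R kl.2))

section PartitionBlockApprox

variable {ι κ E F : Type*} [MeasurableSpace E] [MeasurableSpace F]
  {μ : Measure E} {ν : Measure F} {γ : Measure (E × F)} {Q : ι → Set E} {R : κ → Set F}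

lemma map_swap_partitionBlockApprox [SFinite μ] [SFinite ν] :
    (partitionBlockApprox μ ν γ Q R).map Prod.swap =
      partitionBlockApprox ν μ (γ.map Prod.swap) R Q := by
  rw [partitionBlockApprox, Measure.map_sum measurable_swap.aemeasurable,
    partitionBlockApprox, ← Measure.sum_comp_equiv (Equiv.prodComm ι κ)]
  congr 1
  ext1 ⟨k, l⟩
  simp only [Function.comp_apply, Equiv.prodComm_apply, Prod.fst_swap, Prod.snd_swap,
    Measure.map_smul, Measure.prod_swap]
  rw [show (Prod.swap : E × F → F × E) = MeasurableEquiv.prodComm from rfl,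
    MeasurableEquiv.map_apply]
  exact congrArg (γ · • _) (Set.preimage_swap_prod _ _).symm

variable [Countable ι] [Countable κ] [IsFiniteMeasure μ] [IsFiniteMeasure ν]

theorem map_fst_partitionBlockApprox (hγ : IsCoupling γ μ ν) (hQ : IsMeasurablePartition Q)
    (hR : IsMeasurablePartition R) : (partitionBlockApprox μ ν γ Q R).map Prod.fst = μ := by
  have hweight : ∀ k l, γ (Q k ×ˢ R l) * normRestrict ν (R l) Set.univ = γ (Q k ×ˢ R l) := by
    intro k l
    by_cases hνR : ν (R l) = 0
    · rw [hγ.measure_prod_eq_zero_of_right _ (hR.measurableSet l) hνR, zero_mul]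
    · rw [normRestrict_univ ν hνR, mul_one]
  calc (partitionBlockApprox μ ν γ Q R).map Prod.fst
      = Measure.sum fun kl : ι × κ => γ (Q kl.1 ×ˢ R kl.2) • normRestrict μ (Q kl.1) := by
        simp only [partitionBlockApprox, Measure.map_sum measurable_fst.aemeasurable,
          Measure.map_smul, Measure.map_fst_prod, smul_smul, hweight]
    _ = Measure.sum fun k => μ (Q k) • normRestrict μ (Q k) := by
        rw [← Measure.sum_sum fun k l => γ (Q k ×ˢ R l) • normRestrict μ (Q k)]
        simp only [Measure.sum_smul_const, hγ.tsum_measure_prod (hQ.measurableSet _) hR]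
    _ = μ := by simp only [measure_smul_normRestrict, hQ.sum_restrict]

theorem map_snd_partitionBlockApprox (hγ : IsCoupling γ μ ν) (hQ : IsMeasurablePartition Q)
    (hR : IsMeasurablePartition R) : (partitionBlockApprox μ ν γ Q R).map Prod.snd = ν := by
  rw [show (Prod.snd : E × F → F) = Prod.fst ∘ Prod.swap from rfl,
    ← Measure.map_map measurable_fst measurable_swap, map_swap_partitionBlockApprox]
  exact map_fst_partitionBlockApprox hγ.swap hR hQ

theorem isCoupling_partitionBlockApprox (hγ : IsCoupling γ μ ν) (hQ : IsMeasurablePartition Q)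
    (hR : IsMeasurablePartition R) : IsCoupling (partitionBlockApprox μ ν γ Q R) μ ν :=
  ⟨map_fst_partitionBlockApprox hγ hQ hR, map_snd_partitionBlockApprox hγ hQ hR⟩

end PartitionBlockApprox

lemma measurableSet_blockCube (d : ℕ) (δ : ℝ) (k : Fin d → ℤ) :
    MeasurableSet (blockCube d δ k) := by
  simp only [blockCube, Set.ofPred_forall]
  exact MeasurableSet.iInter fun i => measurableSet_Ico.preimage (by fun_prop)

lemma mem_blockCube_iff {d : ℕ} {δ : ℝ} (hδ : 0 < δ) {x : Rd d} {k : Fin d → ℤ} :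
    x ∈ blockCube d δ k ↔ (fun i => ⌊x i / δ⌋) = k := by
  simp only [blockCube, Set.mem_ofPred_eq, Set.mem_Ico, funext_iff, Int.floor_eq_iff,
    le_div_iff₀ hδ, div_lt_iff₀ hδ, mul_comm δ]

lemma isMeasurablePartition_blockCube {d : ℕ} {δ : ℝ} (hδ : 0 < δ) :
    IsMeasurablePartition (blockCube d δ) where
  measurableSet := measurableSet_blockCube d δ
  pairwise_disjoint _ _ hkl := Set.disjoint_left.2 fun _ hk hl =>
    hkl (((mem_blockCube_iff hδ).1 hk).symm.trans ((mem_blockCube_iff hδ).1 hl))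
  iUnion_eq_univ :=
    Set.eq_univ_of_forall fun _ => Set.mem_iUnion.2 ⟨_, (mem_blockCube_iff hδ).2 rfl⟩

theorem blockApprox_isCoupling_general {d : ℕ}
    (μ ν : Measure (Rd d)) [IsProbabilityMeasure μ] [IsProbabilityMeasure ν]
    (γ : Measure (Rd d × Rd d)) (hγC : IsCoupling γ μ ν)
    (δ : ℝ) (hδ : δ ∈ Set.Ioo (0 : ℝ) 1) :
    IsProbabilityMeasure (blockApprox μ ν γ δ) ∧ IsCoupling (blockApprox μ ν γ δ) μ ν := by
  have hcube := isMeasurablePartition_blockCube (d := d) hδ.1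
  have hcoupling : IsCoupling (blockApprox μ ν γ δ) μ ν :=
    isCoupling_partitionBlockApprox hγC hcube hcube
  exact ⟨hcoupling.isProbabilityMeasure, hcoupling⟩

/-- The block approximation of a transport plan is again a transport plan. -/
theorem blockApprox_isCoupling {d : ℕ}
    (μ ν : Measure (Rd d)) [IsProbabilityMeasure μ] [IsProbabilityMeasure ν]
    (hμ : IsCompact (msupport μ)) (hν : IsCompact (msupport ν))
    (γ : Measure (Rd d × Rd d)) (hγP : IsProbabilityMeasure γ) (hγC : IsCoupling γ μ ν)
    (δ : ℝ) (hδ : δ ∈ Set.Ioo (0 : ℝ) 1) :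
    IsProbabilityMeasure (blockApprox μ ν γ δ) ∧ IsCoupling (blockApprox μ ν γ δ) μ ν :=
  blockApprox_isCoupling_general μ ν γ hγC δ hδ
end
end

section
/- (Coincidence of I_∞ and Ĩ_∞ on the marginal supports) The functions I_∞ and Ĩ_∞ coincide on (spt(μ) × ℝ^d) ∪ (ℝ^d × spt(ν)). -/
open MeasureTheory ENNReal Filter
open scoped Classical

noncomputable section

/-- Γ is ∞-cyclically monotone: for all finite families (x_i,y_i)_{i} ⊂ Γ,
    max_i c(x_i,y_i) ≤ max_i c(x_i,y_{i+1}) with cyclic successor. -/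
def InftyCM {d : ℕ} (c : Rd d × Rd d → ℝ) (Γ : Set (Rd d × Rd d)) : Prop :=
  ∀ (k : ℕ) (x y : Fin (k + 1) → Rd d), (∀ i, (x i, y i) ∈ Γ) →
    (Finset.univ.sup' Finset.univ_nonempty fun i => c (x i, y i)) ≤
      Finset.univ.sup' Finset.univ_nonempty fun i => c (x i, y (i + 1))

/-- The rate function I_∞(x,y): supremum over k ≥ 2 points (the first being (x,y), the others
    in Γ) and permutations σ of max_i c(x_i,y_i) − max_i c(x_i,y_{σ(i)}). -/
def Irate {d : ℕ} (c : Rd d × Rd d → ℝ) (Γ : Set (Rd d × Rd d)) (z : Rd d × Rd d) : EReal :=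
  ⨆ (k : ℕ) (f : Fin (k + 2) → Rd d × Rd d) (_ : f 0 = z) (_ : ∀ i, i ≠ 0 → f i ∈ Γ)
      (σ : Equiv.Perm (Fin (k + 2))),
    (((Finset.univ.sup' Finset.univ_nonempty fun i => c (f i)) -
        Finset.univ.sup' Finset.univ_nonempty fun i => c ((f i).1, (f (σ i)).2) : ℝ) : EReal)

/-- The rate function Ĩ_∞(x,y): supremum over k ≥ 2 points (the first being (x,y), the others
    in Γ) of max_i c(x_i,y_i) − max_i c(x_i,y_{i+1}), with cyclic successor. -/
def ItildeRate {d : ℕ} (c : Rd d × Rd d → ℝ) (Γ : Set (Rd d × Rd d)) (z : Rd d × Rd d) :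
    EReal :=
  ⨆ (k : ℕ) (f : Fin (k + 2) → Rd d × Rd d) (_ : f 0 = z) (_ : ∀ i, i ≠ 0 → f i ∈ Γ),
    (((Finset.univ.sup' Finset.univ_nonempty fun i => c (f i)) -
        Finset.univ.sup' Finset.univ_nonempty fun i => c ((f i).1, (f (i + 1)).2) : ℝ) : EReal)


/-!
Taking `σ` to be the cyclic shift shows `Ĩ_∞ ≤ I_∞` everywhere. Conversely, split a
configuration `(x_i, y_i)` with permutation `σ` into the cycles of `σ`. A cycle avoiding the
index of `(x, y)` lies in `Γ_∞`, so by ∞-cyclical monotonicity its costs `c(x_i, y_i)` are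
bounded by `max_i c(x_i, y_{σ i})`; the cycle through `(x, y)`, read in the order of `σ`, is an
admissible configuration for `Ĩ_∞`. Hence each term of `I_∞` is at most `max (Ĩ_∞, 0)`.
Finally `Ĩ_∞ ≥ 0` on the marginal supports: if `x ∈ spt μ`, there is `(x', y') ∈ Γ_∞` with
`x'` close to `x`, and by uniform continuity of `c` on a compact set the two-point configuration
`{(x, y), (x', y')}` has value at least `-ε` (symmetrically if `y ∈ spt ν`).
-/

open Finset Function

section Support

variable {E F : Type*} [TopologicalSpace E] [MeasurableSpace E] [TopologicalSpace F]
  [MeasurableSpace F]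

lemma exists_mem_msupport_of_measure_ne_zero [SecondCountableTopology E] {γ : Measure E}
    {U : Set E} (h : γ U ≠ 0) : ∃ w ∈ U, w ∈ msupport γ := by
  by_contra! hcon
  refine h (measure_null_of_locally_null U fun x hx => ?_)
  obtain ⟨V, hV, hV0⟩ : ∃ V ∈ nhds x, γ V = 0 := by simpa [msupport] using hcon x hx
  exact ⟨V ∩ U, inter_mem (nhdsWithin_le_nhds hV) self_mem_nhdsWithin,
    measure_mono_null Set.inter_subset_left hV0⟩

lemma mapsTo_msupport_map {γ : Measure E} {π : E → F} (hπ : Continuous π)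
    (hπm : Measurable π) : Set.MapsTo π (msupport γ) (msupport (γ.map π)) :=
  fun _ hw U hU hU0 => hw _ (hπ.continuousAt hU)
    (nonpos_iff_eq_zero.1 (hU0 ▸ Measure.le_map_apply hπm.aemeasurable U))

lemma exists_mem_msupport_of_mem_msupport_map [SecondCountableTopology E]
    [OpensMeasurableSpace F] {γ : Measure E} {π : E → F} (hπ : Measurable π)
    {x : F} (hx : x ∈ msupport (γ.map π)) {U : Set F} (hU : IsOpen U) (hxU : x ∈ U) :
    ∃ w ∈ msupport γ, π w ∈ U := by
  have hU0 := hx U (hU.mem_nhds hxU)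
  rw [Measure.map_apply hπ hU.measurableSet] at hU0
  obtain ⟨w, hwU, hw⟩ := exists_mem_msupport_of_measure_ne_zero hU0
  exact ⟨w, hw, hwU⟩

lemma IsCoupling.msupport_subset_prod {γ : Measure (E × F)} {μ : Measure E} {ν : Measure F}
    (hγ : IsCoupling γ μ ν) : msupport γ ⊆ msupport μ ×ˢ msupport ν := fun _ hw =>
  ⟨hγ.1 ▸ mapsTo_msupport_map continuous_fst measurable_fst hw,
    hγ.2 ▸ mapsTo_msupport_map continuous_snd measurable_snd hw⟩

end Support

lemma exists_pos_forall_max_swap_le {X Y : Type*} [PseudoMetricSpace X] [PseudoMetricSpace Y]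
    {c : X × Y → ℝ} {A : Set X} {B : Set Y} (hA : IsCompact A) (hB : IsCompact B)
    (hc : ContinuousOn c (A ×ˢ B)) {ε : ℝ} (hε : 0 < ε) :
    ∃ δ > 0, ∀ z ∈ A ×ˢ B, ∀ w ∈ A ×ˢ B, (dist z.1 w.1 < δ ∨ dist z.2 w.2 < δ) →
      max (c (z.1, w.2)) (c (w.1, z.2)) ≤ max (c z) (c w) + ε := by
  obtain ⟨δ, hδ, hcδ⟩ := Metric.uniformContinuousOn_iff.1
    ((hA.prod hB).uniformContinuousOn_of_continuous hc) ε hε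
  have close : ∀ p ∈ A ×ˢ B, ∀ q ∈ A ×ˢ B, dist p q < δ → c p ≤ c q + ε := by
    intro p hp q hq hpq
    have := hcδ p hp q hq hpq
    rw [Real.dist_eq, abs_lt] at this
    linarith
  refine ⟨δ, hδ, fun z hz w hw hzw => ?_⟩
  have hzw' : (z.1, w.2) ∈ A ×ˢ B := ⟨hz.1, hw.2⟩
  have hwz' : (w.1, z.2) ∈ A ×ˢ B := ⟨hw.1, hz.2⟩
  have hz_le := le_max_left (c z) (c w)
  have hw_le := le_max_right (c z) (c w)
  rcases hzw with h | h
  · have h₁ := close _ hzw' w hw (by simpa [Prod.dist_eq] using h)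
    have h₂ := close _ hwz' z hz (by simpa [Prod.dist_eq, dist_comm] using h)
    exact max_le (by linarith) (by linarith)
  · have h₁ := close _ hzw' z hz (by simpa [Prod.dist_eq, dist_comm] using h)
    have h₂ := close _ hwz' w hw (by simpa [Prod.dist_eq] using h)
    exact max_le (by linarith) (by linarith)

lemma Function.IsPeriodicPt.iterate_val_add_one {α : Type*} {g : α → α} {a : α} {m : ℕ}
    (ha : IsPeriodicPt g (m + 1) a) (j : Fin (m + 1)) :
    g^[((j + 1 : Fin (m + 1)) : ℕ)] a = g (g^[(j : ℕ)] a) := by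
  rw [Fin.val_add, Fin.val_one', Nat.add_mod_mod, ha.iterate_mod_apply, iterate_succ_apply']

lemma Equiv.Perm.exists_minimalPeriod_eq_succ {α : Type*} [Finite α] (σ : Equiv.Perm α)
    (a : α) : ∃ m, minimalPeriod σ a = m + 1 :=
  Nat.exists_eq_succ_of_ne_zero
    (minimalPeriod_pos_of_mem_periodicPts (σ.injective.mem_periodicPts a)).ne'

section RateFunctions

variable {d : ℕ} (c : Rd d × Rd d → ℝ) {Γ : Set (Rd d × Rd d)} {z : Rd d × Rd d}

/-- `max_i c(x_i, y_{τ i})` for `f i = (x_i, y_i)`: the terms of `Irate` and `ItildeRate` are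
`pairedCost c f id - pairedCost c f σ` and `pairedCost c f id - pairedCost c f (· + 1)`. -/
def pairedCost {n : ℕ} [NeZero n] (f : Fin n → Rd d × Rd d) (τ : Fin n → Fin n) : ℝ :=
  univ.sup' univ_nonempty fun i => c ((f i).1, (f (τ i)).2)

lemma apply_le_pairedCost_of_isFixedPt {n : ℕ} [NeZero n] (f : Fin n → Rd d × Rd d)
    {τ : Fin n → Fin n} {i : Fin n} (hi : IsFixedPt τ i) : c (f i) ≤ pairedCost c f τ := by
  have h := le_sup' (fun i => c ((f i).1, (f (τ i)).2)) (mem_univ i)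
  rw [hi.eq] at h
  exact h

lemma pairedCost_comp_le {m n : ℕ} [NeZero m] [NeZero n] (f : Fin n → Rd d × Rd d)
    {u : Fin m → Fin n} {τ : Fin m → Fin m} {τ' : Fin n → Fin n}
    (hu : ∀ j, u (τ j) = τ' (u j)) : pairedCost c (f ∘ u) τ ≤ pairedCost c f τ' :=
  sup'_le _ _ fun j _ => by
    show c ((f (u j)).1, (f (u (τ j))).2) ≤ _
    rw [hu]
    exact le_sup' (fun i => c ((f i).1, (f (τ' i)).2)) (mem_univ (u j))

lemma InftyCM.pairedCost_id_le (hΓ : InftyCM c Γ) {k : ℕ} (g : Fin (k + 1) → Rd d × Rd d)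
    (hg : ∀ i, g i ∈ Γ) : pairedCost c g id ≤ pairedCost c g (· + 1) :=
  hΓ k (fun i => (g i).1) (fun i => (g i).2) hg

lemma InftyCM.apply_le_pairedCost_of_forall_iterate_mem (hΓ : InftyCM c Γ) {n : ℕ} [NeZero n]
    (f : Fin n → Rd d × Rd d) (σ : Equiv.Perm (Fin n)) {i : Fin n}
    (hi : ∀ j, f (σ^[j] i) ∈ Γ) : c (f i) ≤ pairedCost c f σ := by
  obtain ⟨m, hm⟩ := σ.exists_minimalPeriod_eq_succ i
  have hper : IsPeriodicPt σ (m + 1) i := hm ▸ isPeriodicPt_minimalPeriod σ i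
  let u : Fin (m + 1) → Fin n := fun j => σ^[j] i
  calc c (f i) = c ((f ∘ u) 0) := rfl
    _ ≤ pairedCost c (f ∘ u) id := apply_le_pairedCost_of_isFixedPt c _ rfl
    _ ≤ pairedCost c (f ∘ u) (· + 1) := hΓ.pairedCost_id_le c _ fun j => hi j
    _ ≤ pairedCost c f σ := pairedCost_comp_le c f hper.iterate_val_add_one

lemma coe_sub_pairedCost_le_ItildeRate {k : ℕ} (g : Fin (k + 2) → Rd d × Rd d) (h0 : g 0 = z)
    (hg : ∀ i, i ≠ 0 → g i ∈ Γ) :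
    ((pairedCost c g id - pairedCost c g (· + 1) : ℝ) : EReal) ≤ ItildeRate c Γ z :=
  le_iSup_of_le k <| le_iSup_of_le g <| le_iSup₂_of_le h0 hg le_rfl

lemma ItildeRate_le_Irate (Γ : Set (Rd d × Rd d)) (z : Rd d × Rd d) :
    ItildeRate c Γ z ≤ Irate c Γ z :=
  iSup_le fun k => iSup_le fun f => iSup₂_le fun h0 hf =>
    le_iSup_of_le k <| le_iSup_of_le f <| le_iSup₂_of_le h0 hf <|
      le_iSup_of_le (Equiv.addRight 1) le_rfl

lemma coe_apply_sub_pairedCost_le_ItildeRate_of_minimalPeriod {n : ℕ} [NeZero n]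
    {f : Fin n → Rd d × Rd d} (h0 : f 0 = z) (hf : ∀ i, i ≠ 0 → f i ∈ Γ)
    {σ : Equiv.Perm (Fin n)} {m : ℕ} (hm : minimalPeriod σ 0 = m + 2) {j : ℕ} (hj : j < m + 2) :
    ((c (f (σ^[j] 0)) - pairedCost c f σ : ℝ) : EReal) ≤ ItildeRate c Γ z := by
  have hper : IsPeriodicPt σ (m + 2) 0 := hm ▸ isPeriodicPt_minimalPeriod σ 0
  let u : Fin (m + 2) → Fin n := fun j => σ^[j] 0
  have hu : ∀ j, j ≠ 0 → u j ≠ 0 := fun j hj hj0 => by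
    have := (IsPeriodicPt.minimalPeriod_le (Fin.pos_iff_ne_zero.2 hj) hj0).trans_lt j.isLt
    omega
  refine le_trans ?_ (coe_sub_pairedCost_le_ItildeRate c (f ∘ u) h0 fun j hj => hf _ (hu j hj))
  exact EReal.coe_le_coe_iff.2 (sub_le_sub (apply_le_pairedCost_of_isFixedPt c (f ∘ u)
    (i := ⟨j, hj⟩) rfl) (pairedCost_comp_le c f hper.iterate_val_add_one))

lemma coe_apply_sub_pairedCost_le_ItildeRate (hΓ : InftyCM c Γ) (hz : 0 ≤ ItildeRate c Γ z)
    {n : ℕ} [NeZero n] {f : Fin n → Rd d × Rd d} (h0 : f 0 = z) (hf : ∀ i, i ≠ 0 → f i ∈ Γ)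
    (σ : Equiv.Perm (Fin n)) (i : Fin n) :
    ((c (f i) - pairedCost c f σ : ℝ) : EReal) ≤ ItildeRate c Γ z := by
  have of_le : c (f i) ≤ pairedCost c f σ → ((c (f i) - pairedCost c f σ : ℝ) : EReal) ≤ _ :=
    fun h => (EReal.coe_nonpos.2 (sub_nonpos.2 h)).trans hz
  by_cases hi : σ.SameCycle 0 i
  · obtain ⟨m, hm⟩ := σ.exists_minimalPeriod_eq_succ 0
    obtain ⟨j, hj, rfl⟩ : ∃ j < m + 1, σ^[j] 0 = i := by
      obtain ⟨t, ht⟩ := hi.exists_nat_pow_eq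
      exact ⟨t % (m + 1), Nat.mod_lt _ m.succ_pos, by
        rw [← hm, iterate_mod_minimalPeriod_eq, Equiv.Perm.iterate_eq_pow, ht]⟩
    rcases m with _ | m
    · obtain rfl : j = 0 := by omega
      exact of_le (apply_le_pairedCost_of_isFixedPt c f (minimalPeriod_eq_one_iff_isFixedPt.1 hm))
    · exact coe_apply_sub_pairedCost_le_ItildeRate_of_minimalPeriod c h0 hf hm hj
  · refine of_le (hΓ.apply_le_pairedCost_of_forall_iterate_mem c f σ fun j => hf _ fun hj => ?_)
    exact hi (Equiv.Perm.SameCycle.symm ⟨j, by rw [zpow_natCast, ← Equiv.Perm.iterate_eq_pow, hj]⟩)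

lemma Irate_le_ItildeRate (hΓ : InftyCM c Γ) (hz : 0 ≤ ItildeRate c Γ z) :
    Irate c Γ z ≤ ItildeRate c Γ z := by
  refine iSup_le fun k => iSup_le fun f => iSup₂_le fun h0 hf => iSup_le fun σ => ?_
  obtain ⟨i, -, hi⟩ := exists_mem_eq_sup' univ_nonempty fun i => c (f i)
  rw [hi]
  exact coe_apply_sub_pairedCost_le_ItildeRate c hΓ hz h0 hf σ i

lemma coe_max_sub_max_swap_le_ItildeRate {w : Rd d × Rd d} (hw : w ∈ Γ) :
    ((max (c z) (c w) - max (c (z.1, w.2)) (c (w.1, z.2)) : ℝ) : EReal) ≤ ItildeRate c Γ z := by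
  have h := coe_sub_pairedCost_le_ItildeRate c (k := 0) ![z, w] rfl fun i hi => by
    fin_cases i
    exacts [absurd rfl hi, hw]
  simpa [pairedCost, Fin.univ_succ] using h

lemma ItildeRate_nonneg (hc : Continuous c) {μ ν : Measure (Rd d)}
    (hμ : IsCompact (msupport μ)) (hν : IsCompact (msupport ν)) {γ : Measure (Rd d × Rd d)}
    (hγ : IsCoupling γ μ ν) (hz : z.1 ∈ msupport μ ∨ z.2 ∈ msupport ν) :
    0 ≤ ItildeRate c (msupport γ) z := by
  refine le_of_forall_lt_imp_le_of_dense fun a ha => ?_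
  obtain ⟨x, hax, hx0⟩ := EReal.lt_iff_exists_real_btwn.1 ha
  have hx : 0 < -x := neg_pos.2 (EReal.coe_lt_coe_iff.1 hx0)
  set K := insert z.1 (msupport μ) ×ˢ insert z.2 (msupport ν)
  obtain ⟨δ, hδ, hswap⟩ :=
    exists_pos_forall_max_swap_le (hμ.insert z.1) (hν.insert z.2) hc.continuousOn hx
  have hzK : z ∈ K := ⟨Set.mem_insert _ _, Set.mem_insert _ _⟩
  have hΓK : msupport γ ⊆ K := fun w hw =>
    Set.prod_mono (Set.subset_insert _ _) (Set.subset_insert _ _) (hγ.msupport_subset_prod hw)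
  obtain ⟨w, hw, hzw⟩ : ∃ w ∈ msupport γ, dist z.1 w.1 < δ ∨ dist z.2 w.2 < δ := by
    rcases hz with hz | hz
    · obtain ⟨w, hw, hwz⟩ := exists_mem_msupport_of_mem_msupport_map measurable_fst
        (hγ.1 ▸ hz) Metric.isOpen_ball (Metric.mem_ball_self hδ)
      exact ⟨w, hw, Or.inl (Metric.mem_ball'.1 hwz)⟩
    · obtain ⟨w, hw, hwz⟩ := exists_mem_msupport_of_mem_msupport_map measurable_snd
        (hγ.2 ▸ hz) Metric.isOpen_ball (Metric.mem_ball_self hδ)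
      exact ⟨w, hw, Or.inr (Metric.mem_ball'.1 hwz)⟩
  have := hswap z hzK w (hΓK hw) hzw
  calc a ≤ x := hax.le
    _ ≤ ((max (c z) (c w) - max (c (z.1, w.2)) (c (w.1, z.2)) : ℝ) : EReal) :=
        EReal.coe_le_coe_iff.2 (by linarith)
    _ ≤ ItildeRate c (msupport γ) z := coe_max_sub_max_swap_le_ItildeRate c hw

end RateFunctions

theorem Irate_eq_ItildeRate_on_supports_general {d : ℕ} (c : Rd d × Rd d → ℝ) (hc : Continuous c)
    (μ ν : Measure (Rd d))
    (hμ : IsCompact (msupport μ)) (hν : IsCompact (msupport ν))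
    (γinf : Measure (Rd d × Rd d))
    (hγinfC : IsCoupling γinf μ ν) (hΓ : InftyCM c (msupport γinf)) :
    ∀ z : Rd d × Rd d, z.1 ∈ msupport μ ∨ z.2 ∈ msupport ν →
      Irate c (msupport γinf) z = ItildeRate c (msupport γinf) z := fun z hz =>
  le_antisymm (Irate_le_ItildeRate c hΓ (ItildeRate_nonneg c hc hμ hν hγinfC hz))
    (ItildeRate_le_Irate c _ z)

/-- (Coincidence of I_∞ and Ĩ_∞ on the marginal supports) I_∞ = Ĩ_∞ on
    (spt(μ) × ℝ^d) ∪ (ℝ^d × spt(ν)). -/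
theorem Irate_eq_ItildeRate_on_supports {d : ℕ} (c : Rd d × Rd d → ℝ) (hc : Continuous c)
    (hc1 : ∀ z, 1 ≤ c z)
    (μ ν : Measure (Rd d)) [IsProbabilityMeasure μ] [IsProbabilityMeasure ν]
    (hμ : IsCompact (msupport μ)) (hν : IsCompact (msupport ν))
    (γinf : Measure (Rd d × Rd d)) (hγinfP : IsProbabilityMeasure γinf)
    (hγinfC : IsCoupling γinf μ ν) (hΓ : InftyCM c (msupport γinf)) :
    ∀ z : Rd d × Rd d, z.1 ∈ msupport μ ∨ z.2 ∈ msupport ν →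
      Irate c (msupport γinf) z = ItildeRate c (msupport γinf) z :=
  Irate_eq_ItildeRate_on_supports_general c hc μ ν hμ hν γinf hγinfC hΓ
end
end
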